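/- arXiv:1611.08761 — 2 statements merged into one kernel-verified Lean document; each statement's English description precedes it below -/
import Mathlib

section
/- Let C and S be defined by C^{-1} = Σ^{-1} + H*Γ^{-1}H and S = HΣH* + Γ, where Σ and Γ are symmetric positive definite matrices on finite-dimensional Euclidean spaces X and Y respectively and H is a linear map from X to Y. Then the Kalman gain K := ΣH*S^{-1} satisfies K = C H* Γ^{-1}, and consequently for any m = C(Σ^{-1}a + H*Γ^{-1}y) one has m = (I - KH)a + Ky. -/
open ContinuousLinearMap RealInnerProductSpace

/-!
Expanding the products gives the push-through identity `(Σ⁻¹ + H*Γ⁻¹H) Σ H* = H*Γ⁻¹ (HΣH* + Γ)`,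
i.e. `C⁻¹ Σ H* = H*Γ⁻¹ S`; multiplying by `C` on the left and by `S⁻¹` on the right gives
`K = C H*Γ⁻¹`. Then `C Σ⁻¹ = C (C⁻¹ - H*Γ⁻¹H) = I - KH`, which is the Kalman form of `m`.
-/

section Semiring

variable {R M N : Type*} [Semiring R]
  [TopologicalSpace M] [AddCommMonoid M] [Module R M]
  [TopologicalSpace N] [AddCommMonoid N] [Module R N]

theorem add_comp_comp_eq_comp_comp_add [ContinuousAdd M] [ContinuousAdd N]
    {Sg Sginv : M →L[R] M} {Gm Gminv : N →L[R] N}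
    (H : M →L[R] N) (G : N →L[R] M) (hSg : Sginv ∘L Sg = 1) (hGm : Gminv ∘L Gm = 1) :
    (Sginv + G ∘L Gminv ∘L H) ∘L Sg ∘L G = (G ∘L Gminv) ∘L (H ∘L Sg ∘L G + Gm) := by
  simp only [add_comp, comp_add, comp_assoc]
  rw [← comp_assoc Sginv Sg, hSg, one_def, id_comp, hGm, one_def, comp_id, add_comm]

theorem comp_eq_comp_of_comp_eq_comp {C Cinv : M →L[R] M} {S Sinv : N →L[R] N}
    {P Q : N →L[R] M} (hC : C ∘L Cinv = 1) (hS : S ∘L Sinv = 1) (h : Cinv ∘L P = Q ∘L S) :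
    P ∘L Sinv = C ∘L Q :=
  calc P ∘L Sinv = (C ∘L Cinv) ∘L P ∘L Sinv := by rw [hC, one_def, id_comp]
    _ = C ∘L (Q ∘L S) ∘L Sinv := by rw [comp_assoc, ← comp_assoc Cinv, h]
    _ = C ∘L Q := by rw [comp_assoc Q, hS, one_def, comp_id]

end Semiring

theorem comp_eq_one_sub_of_eq_add {R M : Type*} [Ring R] [TopologicalSpace M] [AddCommGroup M]
    [Module R M] [IsTopologicalAddGroup M] {C Cinv A B : M →L[R] M} (hC : C ∘L Cinv = 1)
    (h : Cinv = A + B) : C ∘L A = 1 - C ∘L B := by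
  rw [← hC, h, comp_add, add_sub_cancel_right]

theorem kalman_gain_identity_general
    {X Y : Type*} [NormedAddCommGroup X] [InnerProductSpace ℝ X] [FiniteDimensional ℝ X]
    [NormedAddCommGroup Y] [InnerProductSpace ℝ Y] [FiniteDimensional ℝ Y]
    (Sg Sginv C Cinv : X →L[ℝ] X) (Gm Gminv S Sinv : Y →L[ℝ] Y) (H : X →L[ℝ] Y)
    -- inverses
    (hSg2 : Sginv ∘L Sg = 1)
    (hGm2 : Gminv ∘L Gm = 1)
    (hC1 : C ∘L Cinv = 1)
    (hS1 : S ∘L Sinv = 1)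
    -- defining relations
    (hCinv : Cinv = Sginv + (ContinuousLinearMap.adjoint H) ∘L Gminv ∘L H)
    (hSdef : S = H ∘L Sg ∘L (ContinuousLinearMap.adjoint H) + Gm)
    :
    (Sg ∘L (ContinuousLinearMap.adjoint H) ∘L Sinv
      = C ∘L (ContinuousLinearMap.adjoint H) ∘L Gminv) ∧
    (∀ (a : X) (y : Y),
      C (Sginv a + (ContinuousLinearMap.adjoint H) (Gminv y))
        = a - (Sg ∘L (ContinuousLinearMap.adjoint H) ∘L Sinv) (H a)
            + (Sg ∘L (ContinuousLinearMap.adjoint H) ∘L Sinv) y) := by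
  have hpush := add_comp_comp_eq_comp_comp_add H (adjoint H) hSg2 hGm2
  rw [← hCinv, ← hSdef] at hpush
  have hK : Sg ∘L adjoint H ∘L Sinv = C ∘L adjoint H ∘L Gminv := by
    rw [← comp_assoc]
    exact comp_eq_comp_of_comp_eq_comp hC1 hS1 hpush
  have hCSg : C ∘L Sginv = 1 - (C ∘L adjoint H ∘L Gminv) ∘L H := by
    simpa only [comp_assoc] using comp_eq_one_sub_of_eq_add hC1 hCinv
  refine ⟨hK, fun a y => ?_⟩
  rw [hK, map_add, ← comp_apply C Sginv, hCSg]
  rfl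

/-- The Kalman gain `K = Σ H* S⁻¹` (with `S = H Σ H* + Γ`, `C⁻¹ = Σ⁻¹ + H* Γ⁻¹ H`)
satisfies `K = C H* Γ⁻¹`, and consequently `m = C(Σ⁻¹ a + H* Γ⁻¹ y)` can be written
in Kalman form `m = (I - K H) a + K y`. -/
theorem kalman_gain_identity
    {X Y : Type*} [NormedAddCommGroup X] [InnerProductSpace ℝ X] [FiniteDimensional ℝ X]
    [NormedAddCommGroup Y] [InnerProductSpace ℝ Y] [FiniteDimensional ℝ Y]
    (Sg Sginv C Cinv : X →L[ℝ] X) (Gm Gminv S Sinv : Y →L[ℝ] Y) (H : X →L[ℝ] Y)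
    -- symmetry
    (hSgsym : ∀ x x' : X, ⟪Sg x, x'⟫ = ⟪x, Sg x'⟫)
    (hGmsym : ∀ y y' : Y, ⟪Gm y, y'⟫ = ⟪y, Gm y'⟫)
    -- positive definiteness
    (hSgpos : ∀ x : X, x ≠ 0 → 0 < ⟪x, Sg x⟫)
    (hGmpos : ∀ y : Y, y ≠ 0 → 0 < ⟪y, Gm y⟫)
    -- inverses
    (hSg1 : Sg ∘L Sginv = 1) (hSg2 : Sginv ∘L Sg = 1)
    (hGm1 : Gm ∘L Gminv = 1) (hGm2 : Gminv ∘L Gm = 1)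
    (hC1 : C ∘L Cinv = 1) (hC2 : Cinv ∘L C = 1)
    (hS1 : S ∘L Sinv = 1) (hS2 : Sinv ∘L S = 1)
    -- defining relations
    (hCinv : Cinv = Sginv + (ContinuousLinearMap.adjoint H) ∘L Gminv ∘L H)
    (hSdef : S = H ∘L Sg ∘L (ContinuousLinearMap.adjoint H) + Gm)
    :
    (Sg ∘L (ContinuousLinearMap.adjoint H) ∘L Sinv
      = C ∘L (ContinuousLinearMap.adjoint H) ∘L Gminv) ∧
    (∀ (a : X) (y : Y),
      C (Sginv a + (ContinuousLinearMap.adjoint H) (Gminv y))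
        = a - (Sg ∘L (ContinuousLinearMap.adjoint H) ∘L Sinv) (H a)
            + (Sg ∘L (ContinuousLinearMap.adjoint H) ∘L Sinv) y) :=
  kalman_gain_identity_general Sg Sginv C Cinv Gm Gminv S Sinv H hSg2 hGm2 hC1 hS1 hCinv hSdef
end

section
/- Abstract particle-filter consistency by induction: suppose probability measures μ_k satisfy μ_{k+1} = L_{k+1} P μ_k and random probability measures ρ_k^N satisfy ρ_{k+1}^N = L_{k+1} S^N P ρ_k^N with ρ_0^N = μ_0, where P satisfies d(Pμ,Pν) ≤ d(μ,ν), each L_{k+1} satisfies d(L_{k+1}μ, L_{k+1}ν) ≤ λ d(μ,ν) with λ ≥ 1, and d(S^Nν, ν) ≤ N^{-1/2} for all ν. Then d(ρ_K^N, μ_K) ≤ (∑_{k=1}^K λ^k) N^{-1/2} for all K, N ≥ 1. -/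
/-!
The error `e_k = d(ρ_k, μ_k)` satisfies `e_0 = 0` and `e_{k+1} ≤ λ (N^{-1/2} + e_k)`: compare
`S^N P ρ_k` with `P μ_k` through `P ρ_k`, then apply the `λ`-Lipschitz map `L_{k+1}`.
Unrolling this recursion gives the geometric sum `∑_{k=1}^K λ^k` in front of `N^{-1/2}`.
-/

lemma sum_Icc_one_pow_succ (lam : ℝ) (K : ℕ) :
    ∑ k ∈ Finset.Icc 1 (K + 1), lam ^ k = lam * (1 + ∑ k ∈ Finset.Icc 1 K, lam ^ k) := by
  induction K with
  | zero => simp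
  | succ n ih =>
    rw [Finset.sum_Icc_succ_top (by omega : 1 ≤ n + 1 + 1)]
    rw [Finset.sum_Icc_succ_top (by omega : 1 ≤ n + 1)] at ih ⊢
    linear_combination ih

lemma le_sum_Icc_one_pow_mul_of_le_mul_add {e : ℕ → ℝ} {lam ε : ℝ} (hlam : 0 ≤ lam)
    (he0 : e 0 ≤ 0) (hstep : ∀ n, e (n + 1) ≤ lam * (ε + e n)) (K : ℕ) :
    e K ≤ (∑ k ∈ Finset.Icc 1 K, lam ^ k) * ε := by
  induction K with
  | zero => simpa using he0
  | succ n ih =>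
    calc e (n + 1) ≤ lam * (ε + e n) := hstep n
      _ ≤ lam * (ε + (∑ k ∈ Finset.Icc 1 n, lam ^ k) * ε) := by gcongr
      _ = (∑ k ∈ Finset.Icc 1 (n + 1), lam ^ k) * ε := by rw [sum_Icc_one_pow_succ]; ring

lemma le_mul_add_of_contraction_approx_lipschitz {M : Type*} {d : M → M → ℝ}
    (htri : ∀ a b c, d a c ≤ d a b + d b c) {P S L : M → M} {lam ε : ℝ} (hlam : 0 ≤ lam)
    (hP : ∀ a b, d (P a) (P b) ≤ d a b) (hS : ∀ a, d (S a) a ≤ ε)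
    (hL : ∀ a b, d (L a) (L b) ≤ lam * d a b) (x y : M) :
    d (L (S (P x))) (L (P y)) ≤ lam * (ε + d x y) :=
  calc d (L (S (P x))) (L (P y)) ≤ lam * d (S (P x)) (P y) := hL _ _
    _ ≤ lam * (d (S (P x)) (P x) + d (P x) (P y)) := by gcongr; exact htri _ _ _
    _ ≤ lam * (ε + d x y) := by gcongr; exacts [hS _, hP _ _]

theorem abstract_particle_filter_consistency_general
    {M : Type*} (d : M → M → ℝ)
    (hd0 : ∀ a, d a a = 0)
    (htri : ∀ a b c, d a c ≤ d a b + d b c)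
    (Pm : M → M) (L : ℕ → M → M) (SN : M → M)
    (lam : ℝ) (hlam : 1 ≤ lam)
    (N : ℕ)
    (hP : ∀ a b, d (Pm a) (Pm b) ≤ d a b)
    (hL : ∀ k a b, d (L k a) (L k b) ≤ lam * d a b)
    (hS : ∀ a, d (SN a) a ≤ (N : ℝ) ^ (-(1 : ℝ) / 2))
    (μ ρ : ℕ → M)
    (hμ : ∀ k, μ (k + 1) = L (k + 1) (Pm (μ k)))
    (hρ : ∀ k, ρ (k + 1) = L (k + 1) (SN (Pm (ρ k))))
    (h0 : ρ 0 = μ 0) :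
    ∀ K : ℕ, 1 ≤ K →
      d (ρ K) (μ K) ≤ (∑ k ∈ Finset.Icc 1 K, lam ^ k) * (N : ℝ) ^ (-(1 : ℝ) / 2) := by
  intro K _
  have hlam0 : 0 ≤ lam := zero_le_one.trans hlam
  refine le_sum_Icc_one_pow_mul_of_le_mul_add (e := fun k => d (ρ k) (μ k)) hlam0
    (by simp [h0, hd0]) (fun n => ?_) K
  rw [hρ, hμ]
  exact le_mul_add_of_contraction_approx_lipschitz htri hlam0 hP hS (hL (n + 1)) _ _

/-- Abstract particle-filter consistency by induction: if `μ_{k+1} = L_{k+1} P μ_k`,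
`ρ_{k+1}^N = L_{k+1} S^N P ρ_k^N`, `ρ_0^N = μ_0`, where `P` is a contraction for `d`,
each `L_{k+1}` is `λ`-Lipschitz with `λ ≥ 1`, and `d(S^N ν, ν) ≤ N^{-1/2}`, then
`d(ρ_K^N, μ_K) ≤ (∑_{k=1}^K λ^k) N^{-1/2}` for all `K, N ≥ 1`. -/
theorem abstract_particle_filter_consistency
    {M : Type*} (d : M → M → ℝ)
    (hd0 : ∀ a, d a a = 0)
    (htri : ∀ a b c, d a c ≤ d a b + d b c)
    (Pm : M → M) (L : ℕ → M → M) (SN : M → M)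
    (lam : ℝ) (hlam : 1 ≤ lam)
    (N : ℕ) (hN : 1 ≤ N)
    (hP : ∀ a b, d (Pm a) (Pm b) ≤ d a b)
    (hL : ∀ k a b, d (L k a) (L k b) ≤ lam * d a b)
    (hS : ∀ a, d (SN a) a ≤ (N : ℝ) ^ (-(1 : ℝ) / 2))
    (μ ρ : ℕ → M)
    (hμ : ∀ k, μ (k + 1) = L (k + 1) (Pm (μ k)))
    (hρ : ∀ k, ρ (k + 1) = L (k + 1) (SN (Pm (ρ k))))
    (h0 : ρ 0 = μ 0) :
    ∀ K : ℕ, 1 ≤ K →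
      d (ρ K) (μ K) ≤ (∑ k ∈ Finset.Icc 1 K, lam ^ k) * (N : ℝ) ^ (-(1 : ℝ) / 2) :=
  abstract_particle_filter_consistency_general d hd0 htri Pm L SN lam hlam N hP hL hS μ ρ hμ hρ h0
end
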